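/- arXiv:1801.00647 — 4 statements merged into one kernel-verified Lean document; each statement's English description precedes it below -/
import Mathlib

section
/- Sum identity for P_k + P̄_k: if P_k satisfies the Riccati recursion P_k = Q + A'P_{k+1}A − A'P_{k+1}B(R+B'P_{k+1}B)^{-1}B'P_{k+1}A and P̄_k satisfies P̄_k = (A+BF̄_k)'P̄_{k+1}(A+BF̄_k) + F̄_k'(R+B'P_{k+1}B)F̄_k + A'P_{k+1}B(R+B'P_{k+1}B)^{-1}B'P_{k+1}A + A'P_{k+1}BF̄_k + F̄_k'B'P_{k+1}A, then P_k + P̄_k = Q + F̄_k'RF̄_k + (A+BF̄_k)'(P_{k+1}+P̄_{k+1})(A+BF̄_k). -/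
open Matrix

/-- Sum identity for `Pₖ + P̄ₖ`: the sum satisfies a closed-loop Lyapunov
recursion with gain `F̄ₖ`. -/
theorem sum_riccati_lyapunov {n m : ℕ}
    (A : Matrix (Fin n) (Fin n) ℝ) (B : Matrix (Fin n) (Fin m) ℝ)
    (Q P1 Pbar1 : Matrix (Fin n) (Fin n) ℝ) (R : Matrix (Fin m) (Fin m) ℝ)
    (F : Matrix (Fin m) (Fin n) ℝ)
    (hQ : Q.IsSymm) (hR : R.IsSymm) (hP1 : P1.IsSymm) (hPbar1 : Pbar1.IsSymm)
    (hinv : IsUnit (R + Bᵀ * P1 * B))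
    (Pk Pbark : Matrix (Fin n) (Fin n) ℝ)
    (hPk : Pk = Q + Aᵀ * P1 * A -
      Aᵀ * P1 * B * (R + Bᵀ * P1 * B)⁻¹ * Bᵀ * P1 * A)
    (hPbark : Pbark = (A + B * F)ᵀ * Pbar1 * (A + B * F)
      + Fᵀ * (R + Bᵀ * P1 * B) * F
      + Aᵀ * P1 * B * (R + Bᵀ * P1 * B)⁻¹ * Bᵀ * P1 * A
      + Aᵀ * P1 * B * F + Fᵀ * Bᵀ * P1 * A) :
    Pk + Pbark = Q + Fᵀ * R * F
      + (A + B * F)ᵀ * (P1 + Pbar1) * (A + B * F) := by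
  subst hPk hPbark
  simp only [transpose_add, transpose_mul, Matrix.mul_add, Matrix.add_mul]
  noncomm_ring
  simp only [Matrix.mul_assoc]
  abel
end

section
/- Positive definiteness under observability: suppose Q = C'C and the pair (A,C) is observable, meaning that C x = 0, CAx = 0, ..., CA^{n-1}x = 0 imply x = 0. Then there exists N_0 such that for all N > N_0, the finite-horizon Riccati matrix P_0(N) (with terminal condition 0) is positive definite. Equivalently: if x'P_0(N)x = 0 for N ≥ n−1, then x = 0. -/
/-!
One step of the Riccati recursion can be written in Joseph form
`Q + KᵀRK + (A - BK)ᵀP(A - BK)`, with `K = (R + BᵀPB)⁻¹BᵀPA` the optimal gain. This shows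
that the recursion preserves positive semidefiniteness, and that if the new quadratic form
vanishes at `x` then so do `Q` at `x`, `R` at `Kx` (hence `Kx = 0`) and the old form at
`(A - BK)x = Ax`. Following the stages from `P₀` up to the horizon, a zero of `x ↦ xᵀP₀x` makes `Q = CᵀC` vanish
along the free trajectory `Aʲx` for all `j ≤ N`, so `CAʲx = 0`, and observability gives `x = 0`
once `N ≥ n - 1`.
-/

open Matrix

section Riccati

variable {ι κ α : Type*} [Fintype ι] [Fintype κ] [DecidableEq κ]

lemma Matrix.dotProduct_transpose_mul_mulVec [CommSemiring α] {μ : Type*} [Fintype μ]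
    (K : Matrix μ ι α) (M : Matrix μ ι α) (x y : ι → α) :
    x ⬝ᵥ ((Kᵀ * M) *ᵥ y) = (K *ᵥ x) ⬝ᵥ (M *ᵥ y) := by
  rw [← mulVec_mulVec, dotProduct_mulVec, vecMul_transpose]

noncomputable def riccatiStep [CommRing α] (A : Matrix ι ι α) (B : Matrix ι κ α)
    (Q : Matrix ι ι α) (R : Matrix κ κ α) (P : Matrix ι ι α) : Matrix ι ι α :=
  Q + Aᵀ * P * A - Aᵀ * P * B * (R + Bᵀ * P * B)⁻¹ * Bᵀ * P * A

noncomputable def riccatiGain [CommRing α] (A : Matrix ι ι α) (B : Matrix ι κ α)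
    (R : Matrix κ κ α) (P : Matrix ι ι α) : Matrix κ ι α :=
  (R + Bᵀ * P * B)⁻¹ * Bᵀ * P * A

theorem riccatiStep_eq_joseph [CommRing α] (A : Matrix ι ι α) (B : Matrix ι κ α)
    (Q : Matrix ι ι α) (R : Matrix κ κ α) (P : Matrix ι ι α)
    (hG : IsUnit (R + Bᵀ * P * B).det) :
    let K := riccatiGain A B R P
    riccatiStep A B Q R P = Q + Kᵀ * R * K + (A - B * K)ᵀ * P * (A - B * K) := by
  intro K
  have hGK : (R + Bᵀ * P * B) * K = Bᵀ * P * A := by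
    have hK : K = (R + Bᵀ * P * B)⁻¹ * (Bᵀ * P * A) := by
      simp only [K, riccatiGain, Matrix.mul_assoc]
    rw [hK, ← Matrix.mul_assoc, mul_nonsing_inv _ hG, Matrix.one_mul]
  -- `KᵀRK + KᵀBᵀPBK = Kᵀ(R + BᵀPB)K = KᵀBᵀPA` cancels a cross term of the second square.
  have hcross : Kᵀ * Bᵀ * P * A = Kᵀ * R * K + Kᵀ * Bᵀ * P * B * K := by
    calc Kᵀ * Bᵀ * P * A = Kᵀ * ((R + Bᵀ * P * B) * K) := by
          rw [hGK]; simp only [Matrix.mul_assoc]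
      _ = Kᵀ * R * K + Kᵀ * Bᵀ * P * B * K := by
          simp only [Matrix.add_mul, Matrix.mul_add, Matrix.mul_assoc]
  have hgain : Aᵀ * P * B * (R + Bᵀ * P * B)⁻¹ * Bᵀ * P * A = Aᵀ * P * B * K := by
    simp only [K, riccatiGain, Matrix.mul_assoc]
  rw [riccatiStep, hgain]
  simp only [transpose_sub, transpose_mul, Matrix.sub_mul, Matrix.mul_sub, ← Matrix.mul_assoc]
  rw [hcross]
  abel

end Riccati

section Real

variable {ι κ : Type*} [Fintype ι] [Fintype κ] [DecidableEq κ]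
  {A : Matrix ι ι ℝ} {B : Matrix ι κ ℝ} {Q : Matrix ι ι ℝ} {R : Matrix κ κ ℝ}

lemma Matrix.PosSemidef.transpose_mul_mul_same {μ : Type*} [Fintype μ] {M : Matrix μ μ ℝ}
    (hM : M.PosSemidef) (K : Matrix μ ι ℝ) : (Kᵀ * M * K).PosSemidef := by
  simpa using hM.conjTranspose_mul_mul_same K

lemma Matrix.PosSemidef.dotProduct_mulVec_nonneg_real {M : Matrix ι ι ℝ} (hM : M.PosSemidef)
    (x : ι → ℝ) : 0 ≤ x ⬝ᵥ (M *ᵥ x) := by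
  simpa using hM.dotProduct_mulVec_nonneg x

lemma isUnit_det_add_transpose_mul_mul {P : Matrix ι ι ℝ} (hR : R.PosDef) (hP : P.PosSemidef) :
    IsUnit (R + Bᵀ * P * B).det :=
  (isUnit_iff_isUnit_det _).1 (hR.add_posSemidef (hP.transpose_mul_mul_same B)).isUnit

lemma posSemidef_riccatiStep {P : Matrix ι ι ℝ} (hQ : Q.PosSemidef) (hR : R.PosDef)
    (hP : P.PosSemidef) : (riccatiStep A B Q R P).PosSemidef := by
  rw [riccatiStep_eq_joseph A B Q R P (isUnit_det_add_transpose_mul_mul hR hP)]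
  exact (hQ.add (hR.posSemidef.transpose_mul_mul_same _)).add (hP.transpose_mul_mul_same _)

lemma riccatiStep_dotProduct_mulVec_eq_zero {P : Matrix ι ι ℝ} (hQ : Q.PosSemidef)
    (hR : R.PosDef) (hP : P.PosSemidef) {x : ι → ℝ}
    (hx : x ⬝ᵥ (riccatiStep A B Q R P *ᵥ x) = 0) :
    x ⬝ᵥ (Q *ᵥ x) = 0 ∧ (A *ᵥ x) ⬝ᵥ (P *ᵥ (A *ᵥ x)) = 0 := by
  set K := riccatiGain A B R P
  rw [riccatiStep_eq_joseph A B Q R P (isUnit_det_add_transpose_mul_mul hR hP), add_mulVec,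
    add_mulVec, dotProduct_add, dotProduct_add, Matrix.mul_assoc, Matrix.mul_assoc,
    dotProduct_transpose_mul_mulVec, dotProduct_transpose_mul_mulVec, ← mulVec_mulVec,
    ← mulVec_mulVec] at hx
  have hQx := hQ.dotProduct_mulVec_nonneg_real x
  have hRKx := hR.posSemidef.dotProduct_mulVec_nonneg_real (K *ᵥ x)
  have hPx := hP.dotProduct_mulVec_nonneg_real ((A - B * K) *ᵥ x)
  have hKx : K *ᵥ x = 0 := by
    by_contra hne
    have := hR.dotProduct_mulVec_pos hne
    simp only [star_trivial] at this
    linarith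
  have hclosed : (A - B * K) *ᵥ x = A *ᵥ x := by
    rw [sub_mulVec, ← mulVec_mulVec, hKx, mulVec_zero, sub_zero]
  rw [← hclosed]
  constructor <;> linarith

variable {S : ℕ → Matrix ι ι ℝ} {N : ℕ}

lemma posSemidef_riccati_backward (hQ : Q.PosSemidef) (hR : R.PosDef)
    (hfin : S (N + 1) = 0) (hS : ∀ k ≤ N, S k = riccatiStep A B Q R (S (k + 1)))
    {k : ℕ} (hk : k ≤ N + 1) : (S k).PosSemidef := by
  induction hk using Nat.decreasingInduction with
  | self => exact hfin ▸ PosSemidef.zero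
  | of_succ k hk ih => exact hS k (by omega) ▸ posSemidef_riccatiStep hQ hR ih

lemma riccati_backward_dotProduct_mulVec_eq_zero [DecidableEq ι] (hQ : Q.PosSemidef)
    (hR : R.PosDef) (hfin : S (N + 1) = 0) (hS : ∀ k ≤ N, S k = riccatiStep A B Q R (S (k + 1)))
    {k : ℕ} {x : ι → ℝ} (hx : x ⬝ᵥ (S k *ᵥ x) = 0) {j : ℕ} (hj : k + j ≤ N) :
    (A ^ j *ᵥ x) ⬝ᵥ (Q *ᵥ (A ^ j *ᵥ x)) = 0 := by
  have hstep : ∀ {k : ℕ} {x : ι → ℝ}, k ≤ N → x ⬝ᵥ (S k *ᵥ x) = 0 →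
      x ⬝ᵥ (Q *ᵥ x) = 0 ∧ (A *ᵥ x) ⬝ᵥ (S (k + 1) *ᵥ (A *ᵥ x)) = 0 := fun hk hx =>
    riccatiStep_dotProduct_mulVec_eq_zero hQ hR
      (posSemidef_riccati_backward hQ hR hfin hS (by omega)) (hS _ hk ▸ hx)
  induction j generalizing k x with
  | zero => simpa using (hstep (by omega) hx).1
  | succ j ih =>
    rw [pow_succ, ← mulVec_mulVec]
    exact ih (hstep (by omega) hx).2 (by omega)

end Real

/-- Under observability of `(A, C)` with `Q = CᵀC`, the finite-horizon Riccati
matrix at time 0 is positive definite for all sufficiently large horizons. -/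
theorem riccati_posDef_of_observable {n m p : ℕ}
    (A : Matrix (Fin n) (Fin n) ℝ) (B : Matrix (Fin n) (Fin m) ℝ)
    (C : Matrix (Fin p) (Fin n) ℝ)
    (Q : Matrix (Fin n) (Fin n) ℝ) (R : Matrix (Fin m) (Fin m) ℝ)
    (hQ : Q = Cᵀ * C) (hR : R.PosDef)
    (hobs : ∀ x : Fin n → ℝ, (∀ j < n, C *ᵥ (A ^ j *ᵥ x) = 0) → x = 0)
    (P : ℕ → ℕ → Matrix (Fin n) (Fin n) ℝ)
    (hPfin : ∀ N, P N (N + 1) = 0)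
    (hP : ∀ N, ∀ k ≤ N, P N k = Q + Aᵀ * P N (k + 1) * A -
      Aᵀ * P N (k + 1) * B * (R + Bᵀ * P N (k + 1) * B)⁻¹ *
        Bᵀ * P N (k + 1) * A) :
    ∃ N0 : ℕ, ∀ N > N0, (P N 0).PosDef := by
  refine ⟨n, fun N hN => ?_⟩
  have hQpsd : Q.PosSemidef := hQ ▸ by simpa using posSemidef_conjTranspose_mul_self C
  have hS : ∀ k ≤ N, P N k = riccatiStep A B Q R (P N (k + 1)) := hP N
  have hpsd := posSemidef_riccati_backward hQpsd hR (hPfin N) hS (Nat.zero_le _)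
  have hker : ∀ x, x ⬝ᵥ (P N 0 *ᵥ x) = 0 → x = 0 := fun x hx => hobs x fun j hj => by
    have hCx := riccati_backward_dotProduct_mulVec_eq_zero hQpsd hR (hPfin N) hS hx
      (j := j) (by omega)
    rwa [hQ, dotProduct_transpose_mul_mulVec, dotProduct_self_eq_zero] at hCx
  refine PosDef.of_dotProduct_mulVec_pos hpsd.isHermitian fun x hx => ?_
  simpa using (hpsd.dotProduct_mulVec_nonneg_real x).lt_of_ne' (mt (hker x) hx)
end

section
/- Infinite-horizon Lyapunov decrease identity: if P solves the ARE P = Q + A'PA − A'PB(R+B'PB)^{-1}B'PA and P̄ solves the coupled ARE P̄ = (A+BF̄)'P̄(A+BF̄) + F̄'(R+B'PB)F̄ + A'PB(R+B'PB)^{-1}B'PA + A'PBF̄ + F̄'B'PA, and V(x_k, x̄_k) = Σ_i (x_k^i)'P x_k^i + (1/Σ_i μ_i²) x̄_k'P̄x̄_k, then along trajectories x_{k+1}^i = Ax_k^i + Bu_k^i with ū_k = F̄x̄_k and u_k^i = Kx_k^i + (μ_i/Σ_j μ_j²)K̄x̄_k (K = −(R+B'PB)^{-1}B'PA, K̄ =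 F̄ − K), one has V(x_k,x̄_k) − V(x_{k+1},x̄_{k+1}) = Σ_i [(x_k^i)'Qx_k^i + (u_k^i)'Ru_k^i] ≥ 0. -/
open Matrix BigOperators

/-!
With `S = R + BᵀPB` and the gain `K`, the Riccati equation for `P` is equivalent to completing
the square: `x'Px - (Ax + Bu)'P(Ax + Bu) = x'Qx + u'Ru - (u - Kx)'S(u - Kx)` for all `x, u`.
Agent `i` deviates from the optimal feedback by `u - Kx = (μᵢ / Σ μⱼ²) K̄x̄`, so the agents
together lose `(1 / Σ μⱼ²) (K̄x̄)'S(K̄x̄)`. The average follows `x̄⁺ = (A + BF̄)x̄`, and the coupled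
Riccati equation says precisely `P̄ - (A + BF̄)'P̄(A + BF̄) = K̄'SK̄`, so the mean-field term of `V`
makes up exactly that loss.
-/

namespace Matrix

variable {𝕜 ι κ τ σ α : Type*} [CommRing 𝕜] [Fintype ι]

theorem dotProduct_transpose_mul_mul_mulVec [Fintype κ] [Fintype τ] [Fintype σ]
    (M : Matrix τ ι 𝕜) (N : Matrix τ σ 𝕜) (L : Matrix σ κ 𝕜) (x : ι → 𝕜) (y : κ → 𝕜) :
    x ⬝ᵥ (Mᵀ * N * L) *ᵥ y = (M *ᵥ x) ⬝ᵥ N *ᵥ (L *ᵥ y) := by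
  rw [← mulVec_mulVec, ← mulVec_mulVec, dotProduct_transpose_mulVec, dotProduct_comm]

theorem IsSymm.dotProduct_mulVec_comm {P : Matrix ι ι 𝕜} (hP : P.IsSymm) (x y : ι → 𝕜) :
    x ⬝ᵥ P *ᵥ y = y ⬝ᵥ P *ᵥ x := by
  rw [← dotProduct_transpose_mulVec, hP.eq]

theorem IsSymm.transpose_mul_mul {P : Matrix ι ι 𝕜} (hP : P.IsSymm) (B : Matrix ι κ 𝕜) :
    (Bᵀ * P * B).IsSymm := by
  simp only [IsSymm, transpose_mul, transpose_transpose, hP.eq, Matrix.mul_assoc]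

theorem sum_smul_mulVec_add_mulVec [Fintype κ] [Fintype α] (A : Matrix ι ι 𝕜)
    (B : Matrix ι κ 𝕜) (μ : α → 𝕜) (x : α → ι → 𝕜) (u : α → κ → 𝕜) :
    ∑ i, μ i • (A *ᵥ x i + B *ᵥ u i) = A *ᵥ ∑ i, μ i • x i + B *ᵥ ∑ i, μ i • u i := by
  simp only [smul_add, Finset.sum_add_distrib, mulVec_sum, mulVec_smul]

end Matrix

section Riccati

variable {𝕜 ι κ : Type*} [CommRing 𝕜] [Fintype ι] [Fintype κ]
  {A Q P : Matrix ι ι 𝕜} {B : Matrix ι κ 𝕜} {R : Matrix κ κ 𝕜} {K : Matrix κ ι 𝕜}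

theorem riccati_mul_gain [DecidableEq κ] (hS : IsUnit (R + Bᵀ * P * B))
    (hK : K = -((R + Bᵀ * P * B)⁻¹ * Bᵀ * P * A)) :
    (R + Bᵀ * P * B) * K = -(Bᵀ * P * A) := by
  rw [hK, Matrix.mul_neg]
  simp only [← Matrix.mul_assoc, mul_nonsing_inv _ ((isUnit_iff_isUnit_det _).mp hS),
    Matrix.one_mul]

theorem riccati_quadratic_term_eq [DecidableEq κ] (hP : P.IsSymm) (hR : R.IsSymm)
    (hS : IsUnit (R + Bᵀ * P * B)) (hK : K = -((R + Bᵀ * P * B)⁻¹ * Bᵀ * P * A)) :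
    Aᵀ * P * B * (R + Bᵀ * P * B)⁻¹ * Bᵀ * P * A = Kᵀ * (R + Bᵀ * P * B) * K := by
  have hSsymm := hR.add (hP.transpose_mul_mul B)
  rw [Matrix.mul_assoc Kᵀ, riccati_mul_gain hS hK, hK]
  set S := R + Bᵀ * P * B
  simp only [transpose_neg, transpose_mul, transpose_nonsing_inv, hSsymm.eq, hP.eq,
    transpose_transpose, Matrix.neg_mul, Matrix.mul_neg, neg_neg, Matrix.mul_assoc]

theorem riccati_cross_term (hSK : (R + Bᵀ * P * B) * K = -(Bᵀ * P * A)) (w : κ → 𝕜)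
    (x : ι → 𝕜) :
    (B *ᵥ w) ⬝ᵥ P *ᵥ (A *ᵥ x) = -(w ⬝ᵥ (R + Bᵀ * P * B) *ᵥ (K *ᵥ x)) := by
  rw [mulVec_mulVec x _ K, hSK, neg_mulVec, dotProduct_neg, dotProduct_transpose_mul_mul_mulVec,
    neg_neg]

theorem riccati_completion_of_squares (hP : P.IsSymm) (hR : R.IsSymm)
    (hSK : (R + Bᵀ * P * B) * K = -(Bᵀ * P * A))
    (hARE : P = Q + Aᵀ * P * A - Kᵀ * (R + Bᵀ * P * B) * K) (x : ι → 𝕜) (u : κ → 𝕜) :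
    x ⬝ᵥ P *ᵥ x - (A *ᵥ x + B *ᵥ u) ⬝ᵥ P *ᵥ (A *ᵥ x + B *ᵥ u)
      = x ⬝ᵥ Q *ᵥ x + u ⬝ᵥ R *ᵥ u
        - (u - K *ᵥ x) ⬝ᵥ (R + Bᵀ * P * B) *ᵥ (u - K *ᵥ x) := by
  have hSsymm := hR.add (hP.transpose_mul_mul B)
  have hx : x ⬝ᵥ P *ᵥ x = x ⬝ᵥ Q *ᵥ x + (A *ᵥ x) ⬝ᵥ P *ᵥ (A *ᵥ x)
      - (K *ᵥ x) ⬝ᵥ (R + Bᵀ * P * B) *ᵥ (K *ᵥ x) := by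
    conv_lhs => rw [hARE]
    simp only [sub_mulVec, add_mulVec, dotProduct_sub, dotProduct_add,
      dotProduct_transpose_mul_mul_mulVec]
  have hux := riccati_cross_term hSK u x
  have hxu : (K *ᵥ x) ⬝ᵥ (R + Bᵀ * P * B) *ᵥ u = u ⬝ᵥ (R + Bᵀ * P * B) *ᵥ (K *ᵥ x) :=
    hSsymm.dotProduct_mulVec_comm _ _
  have hAB : (A *ᵥ x) ⬝ᵥ P *ᵥ (B *ᵥ u) = (B *ᵥ u) ⬝ᵥ P *ᵥ (A *ᵥ x) :=
    hP.dotProduct_mulVec_comm _ _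
  have huu : u ⬝ᵥ (R + Bᵀ * P * B) *ᵥ u = u ⬝ᵥ R *ᵥ u + (B *ᵥ u) ⬝ᵥ P *ᵥ (B *ᵥ u) := by
    rw [add_mulVec, dotProduct_add, dotProduct_transpose_mul_mul_mulVec]
  simp only [mulVec_add, mulVec_sub, add_dotProduct, sub_dotProduct, dotProduct_add,
    dotProduct_sub]
  linear_combination hx + huu - hxu - 2 * hux - hAB

theorem coupled_riccati_decrease (hP : P.IsSymm) (hR : R.IsSymm)
    (hSK : (R + Bᵀ * P * B) * K = -(Bᵀ * P * A)) {F : Matrix κ ι 𝕜} {Pbar : Matrix ι ι 𝕜}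
    (hPbar : Pbar = (A + B * F)ᵀ * Pbar * (A + B * F) + Fᵀ * (R + Bᵀ * P * B) * F
      + Kᵀ * (R + Bᵀ * P * B) * K + Aᵀ * P * B * F + Fᵀ * Bᵀ * P * A) (y : ι → 𝕜) :
    y ⬝ᵥ Pbar *ᵥ y - ((A + B * F) *ᵥ y) ⬝ᵥ Pbar *ᵥ ((A + B * F) *ᵥ y)
      = ((F - K) *ᵥ y) ⬝ᵥ (R + Bᵀ * P * B) *ᵥ ((F - K) *ᵥ y) := by
  have hSsymm := hR.add (hP.transpose_mul_mul B)
  have hcross := riccati_cross_term hSK (F *ᵥ y) y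
  have hAB := hP.dotProduct_mulVec_comm (A *ᵥ y) (B *ᵥ (F *ᵥ y))
  have hKF := hSsymm.dotProduct_mulVec_comm (K *ᵥ y) (F *ᵥ y)
  set S := R + Bᵀ * P * B
  set G := A + B * F
  have hy : y ⬝ᵥ Pbar *ᵥ y = (G *ᵥ y) ⬝ᵥ Pbar *ᵥ (G *ᵥ y) + (F *ᵥ y) ⬝ᵥ S *ᵥ (F *ᵥ y)
      + (K *ᵥ y) ⬝ᵥ S *ᵥ (K *ᵥ y) + (A *ᵥ y) ⬝ᵥ P *ᵥ (B *ᵥ (F *ᵥ y))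
      + (B *ᵥ (F *ᵥ y)) ⬝ᵥ P *ᵥ (A *ᵥ y) := by
    conv_lhs => rw [hPbar]
    rw [Matrix.mul_assoc (Aᵀ * P) B F, ← transpose_mul]
    simp only [add_mulVec, dotProduct_add, dotProduct_transpose_mul_mul_mulVec]
    simp only [← mulVec_mulVec]
  rw [hy]
  simp only [sub_mulVec, mulVec_sub, dotProduct_sub, sub_dotProduct]
  linear_combination hAB + 2 * hcross + hKF

end Riccati

theorem lyapunov_decrease_identity_general {n m v : ℕ}
    (A : Matrix (Fin n) (Fin n) ℝ) (B : Matrix (Fin n) (Fin m) ℝ)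
    (Q : Matrix (Fin n) (Fin n) ℝ) (R : Matrix (Fin m) (Fin m) ℝ)
    (F : Matrix (Fin m) (Fin n) ℝ)
    (hQ : Q.PosSemidef) (hR : R.PosDef)
    (μ : Fin v → ℝ) (hμ : ∑ i, (μ i) ^ 2 ≠ 0)
    (P Pbar : Matrix (Fin n) (Fin n) ℝ)
    (hPsymm : P.IsSymm)
    (hinv : IsUnit (R + Bᵀ * P * B))
    (hP : P = Q + Aᵀ * P * A -
      Aᵀ * P * B * (R + Bᵀ * P * B)⁻¹ * Bᵀ * P * A)
    (hPbar : Pbar = (A + B * F)ᵀ * Pbar * (A + B * F)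
      + Fᵀ * (R + Bᵀ * P * B) * F
      + Aᵀ * P * B * (R + Bᵀ * P * B)⁻¹ * Bᵀ * P * A
      + Aᵀ * P * B * F + Fᵀ * Bᵀ * P * A)
    (K Kbar : Matrix (Fin m) (Fin n) ℝ)
    (hK : K = -((R + Bᵀ * P * B)⁻¹ * Bᵀ * P * A)) (hKbar : Kbar = F - K)
    (x : Fin v → ℕ → Fin n → ℝ) (u : Fin v → ℕ → Fin m → ℝ)
    (xbar : ℕ → Fin n → ℝ) (ubar : ℕ → Fin m → ℝ)
    (hx : ∀ k, xbar k = ∑ i, μ i • x i k)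
    (hu : ∀ k, ubar k = ∑ i, μ i • u i k)
    (hdyn : ∀ i k, x i (k + 1) = A *ᵥ x i k + B *ᵥ u i k)
    (hcons : ∀ k, ubar k = F *ᵥ xbar k)
    (hctrl : ∀ i k,
      u i k = K *ᵥ x i k + (μ i / ∑ j, (μ j) ^ 2) • (Kbar *ᵥ xbar k))
    (V : ℕ → ℝ)
    (hV : ∀ k, V k = (∑ i, x i k ⬝ᵥ P *ᵥ x i k)
      + (1 / ∑ i, (μ i) ^ 2) * (xbar k ⬝ᵥ Pbar *ᵥ xbar k)) :
    ∀ k, V k - V (k + 1)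
        = ∑ i, (x i k ⬝ᵥ Q *ᵥ x i k + u i k ⬝ᵥ R *ᵥ u i k) ∧
      0 ≤ ∑ i, (x i k ⬝ᵥ Q *ᵥ x i k + u i k ⬝ᵥ R *ᵥ u i k) := by
  intro k
  set s := ∑ j, μ j ^ 2
  set S := R + Bᵀ * P * B
  have hRsymm : R.IsSymm := isHermitian_iff_isSymm.mp hR.isHermitian
  have hSK := riccati_mul_gain hinv hK
  have hquad := riccati_quadratic_term_eq hPsymm hRsymm hinv hK
  have hagent : ∀ i, x i k ⬝ᵥ P *ᵥ x i k - x i (k + 1) ⬝ᵥ P *ᵥ x i (k + 1)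
      = x i k ⬝ᵥ Q *ᵥ x i k + u i k ⬝ᵥ R *ᵥ u i k
        - (μ i / s) ^ 2 * ((Kbar *ᵥ xbar k) ⬝ᵥ S *ᵥ (Kbar *ᵥ xbar k)) := by
    intro i
    have hdev : u i k - K *ᵥ x i k = (μ i / s) • (Kbar *ᵥ xbar k) := by
      rw [hctrl, add_sub_cancel_left]
    rw [hdyn, riccati_completion_of_squares hPsymm hRsymm hSK (hquad ▸ hP), hdev, mulVec_smul,
      smul_dotProduct, dotProduct_smul, smul_eq_mul, smul_eq_mul]
    ring
  have hmean : xbar k ⬝ᵥ Pbar *ᵥ xbar k - xbar (k + 1) ⬝ᵥ Pbar *ᵥ xbar (k + 1)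
      = (Kbar *ᵥ xbar k) ⬝ᵥ S *ᵥ (Kbar *ᵥ xbar k) := by
    have hnext : xbar (k + 1) = (A + B * F) *ᵥ xbar k := calc
      xbar (k + 1) = ∑ i, μ i • (A *ᵥ x i k + B *ᵥ u i k) := by simp only [hx, hdyn]
      _ = A *ᵥ xbar k + B *ᵥ ubar k := by rw [sum_smul_mulVec_add_mulVec, hx, hu]
      _ = (A + B * F) *ᵥ xbar k := by rw [hcons, add_mulVec, mulVec_mulVec]
    rw [hnext, coupled_riccati_decrease hPsymm hRsymm hSK (hquad ▸ hPbar), hKbar]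
  have hweights : ∑ i, (μ i / s) ^ 2 = 1 / s := calc
    ∑ i, (μ i / s) ^ 2 = s / s ^ 2 := by simp only [div_pow, ← Finset.sum_div, s]
    _ = 1 / s := by field_simp
  refine ⟨?_, Finset.sum_nonneg fun i _ => add_nonneg ?_ ?_⟩
  · have hsum := Finset.sum_congr rfl fun i (_ : i ∈ Finset.univ) => hagent i
    rw [Finset.sum_sub_distrib, Finset.sum_sub_distrib, ← Finset.sum_mul, hweights] at hsum
    rw [hV, hV]
    linear_combination hsum + (1 / s) * hmean
  · simpa using hQ.dotProduct_mulVec_nonneg (x i k)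
  · simpa using hR.posSemidef.dotProduct_mulVec_nonneg (u i k)

/-- Infinite-horizon Lyapunov decrease identity along trajectories of the
optimal distributed controller. -/
theorem lyapunov_decrease_identity {n m v : ℕ}
    (A : Matrix (Fin n) (Fin n) ℝ) (B : Matrix (Fin n) (Fin m) ℝ)
    (Q : Matrix (Fin n) (Fin n) ℝ) (R : Matrix (Fin m) (Fin m) ℝ)
    (F : Matrix (Fin m) (Fin n) ℝ)
    (hQ : Q.PosSemidef) (hR : R.PosDef)
    (μ : Fin v → ℝ) (hμ : ∑ i, (μ i) ^ 2 ≠ 0)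
    (P Pbar : Matrix (Fin n) (Fin n) ℝ)
    (hPsymm : P.IsSymm) (hPbarsymm : Pbar.IsSymm)
    (hinv : IsUnit (R + Bᵀ * P * B))
    (hP : P = Q + Aᵀ * P * A -
      Aᵀ * P * B * (R + Bᵀ * P * B)⁻¹ * Bᵀ * P * A)
    (hPbar : Pbar = (A + B * F)ᵀ * Pbar * (A + B * F)
      + Fᵀ * (R + Bᵀ * P * B) * F
      + Aᵀ * P * B * (R + Bᵀ * P * B)⁻¹ * Bᵀ * P * A
      + Aᵀ * P * B * F + Fᵀ * Bᵀ * P * A)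
    (K Kbar : Matrix (Fin m) (Fin n) ℝ)
    (hK : K = -((R + Bᵀ * P * B)⁻¹ * Bᵀ * P * A)) (hKbar : Kbar = F - K)
    (x : Fin v → ℕ → Fin n → ℝ) (u : Fin v → ℕ → Fin m → ℝ)
    (xbar : ℕ → Fin n → ℝ) (ubar : ℕ → Fin m → ℝ)
    (hx : ∀ k, xbar k = ∑ i, μ i • x i k)
    (hu : ∀ k, ubar k = ∑ i, μ i • u i k)
    (hdyn : ∀ i k, x i (k + 1) = A *ᵥ x i k + B *ᵥ u i k)
    (hcons : ∀ k, ubar k = F *ᵥ xbar k)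
    (hctrl : ∀ i k,
      u i k = K *ᵥ x i k + (μ i / ∑ j, (μ j) ^ 2) • (Kbar *ᵥ xbar k))
    (V : ℕ → ℝ)
    (hV : ∀ k, V k = (∑ i, x i k ⬝ᵥ P *ᵥ x i k)
      + (1 / ∑ i, (μ i) ^ 2) * (xbar k ⬝ᵥ Pbar *ᵥ xbar k)) :
    ∀ k, V k - V (k + 1)
        = ∑ i, (x i k ⬝ᵥ Q *ᵥ x i k + u i k ⬝ᵥ R *ᵥ u i k) ∧
      0 ≤ ∑ i, (x i k ⬝ᵥ Q *ᵥ x i k + u i k ⬝ᵥ R *ᵥ u i k) :=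
  lyapunov_decrease_identity_general A B Q R F hQ hR μ hμ P Pbar hPsymm hinv hP hPbar K Kbar hK
    hKbar x u xbar ubar hx hu hdyn hcons hctrl V hV
end

section
/- Sum of coupled ARE solutions is a closed-loop Lyapunov solution: if P solves P = Q + A'PA − A'PB(R+B'PB)^{-1}B'PA and P̄ solves the coupled ARE of the average dynamics, then S := P + P̄ satisfies the discrete Lyapunov equation S = Q + F̄'RF̄ + (A+BF̄)'S(A+BF̄). -/
open Matrix

/-- The sum of the coupled ARE solutions satisfies the closed-loop discrete
Lyapunov equation. -/
theorem coupled_are_sum_lyapunov {n m : ℕ}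
    (A : Matrix (Fin n) (Fin n) ℝ) (B : Matrix (Fin n) (Fin m) ℝ)
    (Q : Matrix (Fin n) (Fin n) ℝ) (R : Matrix (Fin m) (Fin m) ℝ)
    (F : Matrix (Fin m) (Fin n) ℝ)
    (hQ : Q.IsSymm) (hR : R.IsSymm)
    (P Pbar : Matrix (Fin n) (Fin n) ℝ)
    (hinv : IsUnit (R + Bᵀ * P * B))
    (hP : P = Q + Aᵀ * P * A -
      Aᵀ * P * B * (R + Bᵀ * P * B)⁻¹ * Bᵀ * P * A)
    (hPbar : Pbar = (A + B * F)ᵀ * Pbar * (A + B * F)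
      + Fᵀ * (R + Bᵀ * P * B) * F
      + Aᵀ * P * B * (R + Bᵀ * P * B)⁻¹ * Bᵀ * P * A
      + Aᵀ * P * B * F + Fᵀ * Bᵀ * P * A) :
    P + Pbar = Q + Fᵀ * R * F + (A + B * F)ᵀ * (P + Pbar) * (A + B * F) := by
  conv_lhs => rw [hP, hPbar]
  simp only [transpose_add, transpose_mul, Matrix.mul_add, Matrix.add_mul,
    Matrix.mul_assoc]
  abel
end
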